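/- Let μ be a probability measure on ℝᵈ with finite first moments, a ∈ {1,…,d}, and δ ≥ 0. Suppose ν is a probability measure on ℝᵈ with W₁(μ, ν) ≤ δ (ℓ¹ ground metric). Then ∫ y_a dν ≥ (∫ y_a dμ) − δ, with equality attained by ν = t_♯μ for t(y) = y − δ eₐ. Consequently the infimum over the Wasserstein ball is attained. -/

import Mathlib

/-! Every coupling `π` of `μ` and `ν` has `∫ y a ∂μ - ∫ y a ∂ν = ∫ (p.1 a - p.2 a) ∂π ≤ ∫ l1dist ∂π`,
since the coordinate projection is 1-Lipschitz for the ℓ¹ distance; taking the infimum over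
couplings gives `∫ y a ∂μ - W₁(μ, ν) ≤ ∫ y a ∂ν`. The translation `t` moves every point by
exactly `δ` in ℓ¹ and lowers the `a`-th coordinate by `δ`, so the coupling `(id, t)_♯ μ`
has cost `δ` and attains the bound. -/

open MeasureTheory Finset

/-- ℓ¹ distance on ℝᵈ. -/
noncomputable def l1dist {d : ℕ} (y y' : Fin d → ℝ) : ℝ := ∑ a, |y a - y' a|

/-- 1-Wasserstein distance w.r.t. a ground cost `c`: infimum over couplings of the
expected cost. -/
noncomputable def W1 {E : Type*} [MeasurableSpace E] (c : E → E → ℝ)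
    (μ ν : Measure E) : ℝ :=
  sInf {r : ℝ | ∃ π : Measure (E × E), IsProbabilityMeasure π ∧
    π.map Prod.fst = μ ∧ π.map Prod.snd = ν ∧ ∫ p, c p.1 p.2 ∂π = r}

section Coupling

variable {E : Type*} [MeasurableSpace E] {c : E → E → ℝ} {μ ν : Measure E}

theorem W1_le_integral_of_coupling (hc : ∀ x y, 0 ≤ c x y) {π : Measure (E × E)}
    [IsProbabilityMeasure π] (hfst : π.map Prod.fst = μ) (hsnd : π.map Prod.snd = ν) :
    W1 c μ ν ≤ ∫ p, c p.1 p.2 ∂π := by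
  refine csInf_le ⟨0, ?_⟩ ⟨π, inferInstance, hfst, hsnd, rfl⟩
  rintro r ⟨π', -, -, -, rfl⟩
  exact integral_nonneg fun p => hc p.1 p.2

theorem le_W1_of_forall_coupling [IsProbabilityMeasure μ] [IsProbabilityMeasure ν] {r : ℝ}
    (h : ∀ π : Measure (E × E), IsProbabilityMeasure π → π.map Prod.fst = μ →
      π.map Prod.snd = ν → r ≤ ∫ p, c p.1 p.2 ∂π) :
    r ≤ W1 c μ ν := by
  refine le_csInf ⟨_, μ.prod ν, inferInstance, by simp, by simp, rfl⟩ ?_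
  rintro _ ⟨π, hπ, hfst, hsnd, rfl⟩
  exact h π hπ hfst hsnd

theorem W1_map_le_integral (hc : ∀ x y, 0 ≤ c x y) (hcm : Measurable (Function.uncurry c))
    [IsProbabilityMeasure μ] {t : E → E} (ht : Measurable t) :
    W1 c μ (μ.map t) ≤ ∫ y, c y (t y) ∂μ := by
  have hg : Measurable fun y => (y, t y) := measurable_id.prodMk ht
  have := Measure.isProbabilityMeasure_map (μ := μ) hg.aemeasurable
  calc W1 c μ (μ.map t) ≤ ∫ p, c p.1 p.2 ∂(μ.map fun y => (y, t y)) :=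
        W1_le_integral_of_coupling hc
          (by rw [Measure.map_map measurable_fst hg]; exact Measure.map_id)
          (by rw [Measure.map_map measurable_snd hg]; rfl)
    _ = ∫ y, c y (t y) ∂μ := integral_map hg.aemeasurable hcm.aestronglyMeasurable

theorem integrable_comp_fst_of_map_fst {f : E → ℝ} {π : Measure (E × E)}
    (hf : Measurable f) (hfst : π.map Prod.fst = μ) (hμ : Integrable f μ) :
    Integrable (fun p => f p.1) π :=
  (integrable_map_measure hf.aestronglyMeasurable measurable_fst.aemeasurable).mp
    (hfst ▸ hμ)

theorem integrable_comp_snd_of_map_snd {f : E → ℝ} {π : Measure (E × E)}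
    (hf : Measurable f) (hsnd : π.map Prod.snd = ν) (hν : Integrable f ν) :
    Integrable (fun p => f p.2) π :=
  (integrable_map_measure hf.aestronglyMeasurable measurable_snd.aemeasurable).mp
    (hsnd ▸ hν)

theorem integral_sub_integral_le_of_coupling {f : E → ℝ} (hf : Measurable f)
    (hfc : ∀ x y, f x - f y ≤ c x y) {π : Measure (E × E)} (hfst : π.map Prod.fst = μ)
    (hsnd : π.map Prod.snd = ν) (hμ : Integrable f μ) (hν : Integrable f ν)
    (hcπ : Integrable (fun p => c p.1 p.2) π) :
    ∫ x, f x ∂μ - ∫ x, f x ∂ν ≤ ∫ p, c p.1 p.2 ∂π := by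
  have h₁ := integrable_comp_fst_of_map_fst hf hfst hμ
  have h₂ := integrable_comp_snd_of_map_snd hf hsnd hν
  calc ∫ x, f x ∂μ - ∫ x, f x ∂ν = ∫ p, (f p.1 - f p.2) ∂π := by
        rw [integral_sub h₁ h₂, ← hfst, ← hsnd,
          integral_map measurable_fst.aemeasurable hf.aestronglyMeasurable,
          integral_map measurable_snd.aemeasurable hf.aestronglyMeasurable]
    _ ≤ ∫ p, c p.1 p.2 ∂π := integral_mono (h₁.sub h₂) hcπ fun p => hfc p.1 p.2

end Coupling

section L1

variable {d : ℕ}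

theorem l1dist_nonneg (y y' : Fin d → ℝ) : 0 ≤ l1dist y y' :=
  sum_nonneg fun _ _ => abs_nonneg _

theorem measurable_uncurry_l1dist : Measurable (Function.uncurry (l1dist (d := d))) := by
  unfold Function.uncurry l1dist
  fun_prop

theorem sub_le_l1dist (y y' : Fin d → ℝ) (a : Fin d) : y a - y' a ≤ l1dist y y' :=
  (le_abs_self _).trans <|
    single_le_sum (f := fun b => |y b - y' b|) (fun _ _ => abs_nonneg _) (mem_univ a)

theorem l1dist_sub_ite (y : Fin d → ℝ) (a : Fin d) (δ : ℝ) :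
    l1dist y (fun i => y i - if i = a then δ else 0) = |δ| := by
  simp [l1dist, apply_ite]

theorem integrable_l1dist_of_coupling {μ ν : Measure (Fin d → ℝ)}
    (hμ : ∀ b : Fin d, Integrable (fun y => y b) μ)
    (hν : ∀ b : Fin d, Integrable (fun y => y b) ν) {π : Measure ((Fin d → ℝ) × (Fin d → ℝ))}
    (hfst : π.map Prod.fst = μ) (hsnd : π.map Prod.snd = ν) :
    Integrable (fun p => l1dist p.1 p.2) π :=
  integrable_finsetSum _ fun b _ =>
    ((integrable_comp_fst_of_map_fst (measurable_pi_apply b) hfst (hμ b)).sub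
      (integrable_comp_snd_of_map_snd (measurable_pi_apply b) hsnd (hν b))).abs

theorem integral_apply_sub_integral_apply_le_W1 {μ ν : Measure (Fin d → ℝ)}
    [IsProbabilityMeasure μ] [IsProbabilityMeasure ν]
    (hμ : ∀ b : Fin d, Integrable (fun y => y b) μ)
    (hν : ∀ b : Fin d, Integrable (fun y => y b) ν) (a : Fin d) :
    ∫ y, y a ∂μ - ∫ y, y a ∂ν ≤ W1 l1dist μ ν :=
  le_W1_of_forall_coupling fun _ _ hfst hsnd =>
    integral_sub_integral_le_of_coupling (measurable_pi_apply a)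
      (fun y y' => sub_le_l1dist y y' a) hfst hsnd (hμ a) (hν a)
      (integrable_l1dist_of_coupling hμ hν hfst hsnd)

end L1

theorem stmt_10 {d : ℕ} (μ : Measure (Fin d → ℝ)) [IsProbabilityMeasure μ]
    (hμ : ∀ b : Fin d, Integrable (fun y => y b) μ)
    (a : Fin d) (δ : ℝ) (hδ : 0 ≤ δ)
    (t : (Fin d → ℝ) → (Fin d → ℝ))
    (ht : t = fun y i => y i - if i = a then δ else 0) :
    (∀ ν : Measure (Fin d → ℝ), IsProbabilityMeasure ν →
        (∀ b : Fin d, Integrable (fun y => y b) ν) →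
        W1 l1dist μ ν ≤ δ → (∫ y, y a ∂μ) - δ ≤ ∫ y, y a ∂ν) ∧
      W1 l1dist μ (μ.map t) ≤ δ ∧
      (∫ y, y a ∂(μ.map t)) = (∫ y, y a ∂μ) - δ := by
  have htm : Measurable t := by
    subst ht
    fun_prop
  refine ⟨fun ν _ hν hW => ?_, ?_, ?_⟩
  · linarith [integral_apply_sub_integral_apply_le_W1 hμ hν a]
  · calc W1 l1dist μ (μ.map t) ≤ ∫ y, l1dist y (t y) ∂μ :=
          W1_map_le_integral l1dist_nonneg measurable_uncurry_l1dist htm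
      _ = δ := by
          simp only [ht, l1dist_sub_ite, abs_of_nonneg hδ, integral_const, probReal_univ,
            one_smul]
  · rw [integral_map htm.aemeasurable (measurable_pi_apply a).aestronglyMeasurable, ht]
    simp [integral_sub (hμ a) (integrable_const δ)]
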